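/- arXiv:1906.12345 — 2 statements merged into one kernel-verified Lean document; each statement's English description precedes it below -/
import Mathlib

section
/- Let f : ℝ^d → ℝ be differentiable, μ-strongly convex (⟨∇f(z) − ∇f(z'), z − z'⟩ ≥ μ‖z − z'‖² for all z, z') with L-Lipschitz gradient, 0 < μ ≤ L, and minimizer z* (∇f(z*) = 0). Let (Ω, F, P) be a probability space with a filtration (F_k)_{k≥1}, and let (z(k))_{k≥1} be an adapted sequence of square-integrable ℝ^d-valued random vectors satisfying z(k+1) = z(k) − (1/(μk)) ḡ(k) for all k ≥ 1, where ḡ(k) is F_{k+1}-measurable, square-integrable, E[ḡ(k) | F_k] = ∇f(z(k)) almost surely, and E[‖ḡ(k) − ∇f(z(k))‖² | F_k] ≤ σ²/n almost surely, for constants σ > 0 and n ≥ 1. Then there exists a constant D ≥ 0 such that for all k ≥ 1, E[‖z(k) − z*‖²] ≤ σ²/(nμ²k) + D/k². -/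
/-!
With stepsize `α = 1/(μk)` the deterministic part of an SGD step contracts the distance to the
minimiser by the factor `1 - αμ = 1 - 1/k` as soon as `α (L + 2μ) ≤ 2`. This follows from the
inequality `‖∇f w‖² + μ(L + μ)‖w - z*‖² ≤ (L + 2μ)⟪∇f w, w - z*⟫`, which is the Baillon–Haddad
co-coercivity argument applied to the convex, `L`-smooth function `f - μ/2 ‖·‖²`. The noise
`ḡ(k) - ∇f(z(k))` is conditionally centred, hence orthogonal in `L²` to everything known at time
`k`, so it only adds its variance `α² σ²/n`. Thus `R(k+1) ≤ (1 - 1/k)² R(k) + A/k²` with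
`A = σ²/(nμ²)` for large `k`, and this recurrence preserves `R(k) ≤ A/k + D/k²` once `D ≥ 2A`.
-/

open MeasureTheory
open scoped RealInnerProductSpace

theorem sub_sub_le_of_deriv_sub_le {φ φ' : ℝ → ℝ} {C : ℝ} (hφ : ∀ t, HasDerivAt φ (φ' t) t)
    (hC : ∀ t ∈ Set.Ioo (0 : ℝ) 1, φ' t - φ' 0 ≤ C * t) :
    φ 1 - φ 0 - φ' 0 ≤ C / 2 := by
  set ψ : ℝ → ℝ := fun t => φ t - t * φ' 0 - C / 2 * t ^ 2
  have hψ : ∀ t, HasDerivAt ψ (φ' t - φ' 0 - C * t) t := fun t =>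
    (((hφ t).sub ((hasDerivAt_id' t).mul_const (φ' 0))).sub
      ((hasDerivAt_pow 2 t).const_mul (C / 2))).congr_deriv (by ring)
  have hanti : AntitoneOn ψ (Set.Icc 0 1) := by
    refine antitoneOn_of_deriv_nonpos (convex_Icc 0 1)
      (fun t _ => (hψ t).continuousAt.continuousWithinAt)
      (fun t _ => (hψ t).differentiableAt.differentiableWithinAt) fun t ht => ?_
    rw [interior_Icc] at ht
    rw [(hψ t).deriv]
    linarith [hC t ht]
  have := hanti (Set.left_mem_Icc.2 zero_le_one) (Set.right_mem_Icc.2 zero_le_one) zero_le_one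
  simp only [ψ] at this
  linarith

theorem norm_sub_sq_le_mul_inner_of_quadratic_bounds {E : Type*} [NormedAddCommGroup E]
    [InnerProductSpace ℝ E] {h : E → ℝ} {G : E → E} {L : ℝ} (hL : 0 < L)
    (lower : ∀ x y, h x + ⟪G x, y - x⟫ ≤ h y)
    (upper : ∀ x y, h y ≤ h x + ⟪G x, y - x⟫ + L / 2 * ‖y - x‖ ^ 2) (x y : E) :
    ‖G y - G x‖ ^ 2 ≤ L * ⟪G y - G x, y - x⟫ := by
  -- compare `h` at `x` and `y` through the point `y - L⁻¹ • (G y - G x)`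
  have bregman : ∀ x y, ‖G y - G x‖ ^ 2 / (2 * L) ≤ h y - h x - ⟪G x, y - x⟫ := fun x y => by
    set w := G y - G x
    have h₁ := lower x (y - L⁻¹ • w)
    have h₂ := upper y (y - L⁻¹ • w)
    rw [show y - L⁻¹ • w - x = (y - x) - L⁻¹ • w by abel, inner_sub_right,
      real_inner_smul_right] at h₁
    rw [show y - L⁻¹ • w - y = -(L⁻¹ • w) by abel, inner_neg_right, real_inner_smul_right,
      norm_neg, norm_smul, Real.norm_of_nonneg (inv_nonneg.2 hL.le)] at h₂
    have hw : ⟪G y, w⟫ - ⟪G x, w⟫ = ‖w‖ ^ 2 := by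
      rw [← inner_sub_left, real_inner_self_eq_norm_sq]
    have : ‖w‖ ^ 2 / (2 * L) = L⁻¹ * (⟪G y, w⟫ - ⟪G x, w⟫) - L / 2 * (L⁻¹ * ‖w‖) ^ 2 := by
      rw [hw]
      field_simp
      ring
    linarith
  have hxy := bregman x y
  have hyx := bregman y x
  rw [← neg_sub y x, inner_neg_right, norm_sub_rev] at hyx
  rw [inner_sub_left]
  rw [div_le_iff₀ (by positivity)] at hxy hyx
  nlinarith

section Smooth

variable {E : Type*} [NormedAddCommGroup E] [InnerProductSpace ℝ E] [CompleteSpace E]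
  {f : E → ℝ}

theorem hasDerivAt_comp_add_smul (hf : Differentiable ℝ f) (x v : E) (t : ℝ) :
    HasDerivAt (fun s : ℝ => f (x + s • v)) ⟪gradient f (x + t • v), v⟫ t := by
  have hline : HasDerivAt (fun s : ℝ => x + s • v) v t := by
    simpa using ((hasDerivAt_id t).smul_const v).const_add x
  simpa [Function.comp_def] using (hf _).hasGradientAt.hasFDerivAt.comp_hasDerivAt t hline

theorem le_add_inner_gradient_add_of_lipschitz {L : ℝ} (hf : Differentiable ℝ f)
    (hlip : ∀ a b, ‖gradient f a - gradient f b‖ ≤ L * ‖a - b‖) (x y : E) :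
    f y ≤ f x + ⟪gradient f x, y - x⟫ + L / 2 * ‖y - x‖ ^ 2 := by
  have key := sub_sub_le_of_deriv_sub_le (C := L * ‖y - x‖ ^ 2)
    (hasDerivAt_comp_add_smul hf x (y - x)) fun t ht => by
      rw [← inner_sub_left]
      calc ⟪gradient f (x + t • (y - x)) - gradient f (x + (0 : ℝ) • (y - x)), y - x⟫
          ≤ ‖gradient f (x + t • (y - x)) - gradient f (x + (0 : ℝ) • (y - x))‖ * ‖y - x‖ :=
            real_inner_le_norm _ _
        _ ≤ L * ‖t • (y - x)‖ * ‖y - x‖ := by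
            gcongr
            simpa using hlip (x + t • (y - x)) x
        _ = L * ‖y - x‖ ^ 2 * t := by
            rw [norm_smul, Real.norm_of_nonneg ht.1.le]
            ring
  simp only [one_smul, zero_smul, add_zero, add_sub_cancel] at key
  linarith

theorem add_inner_gradient_add_le_of_strongly_monotone {μ : ℝ} (hf : Differentiable ℝ f)
    (hsc : ∀ a b, μ * ‖a - b‖ ^ 2 ≤ ⟪gradient f a - gradient f b, a - b⟫) (x y : E) :
    f x + ⟪gradient f x, y - x⟫ + μ / 2 * ‖y - x‖ ^ 2 ≤ f y := by
  have key := sub_sub_le_of_deriv_sub_le (φ := fun s => -f (x + s • (y - x)))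
    (C := -(μ * ‖y - x‖ ^ 2)) (fun t => (hasDerivAt_comp_add_smul hf x (y - x) t).neg)
    fun t ht => by
      have h := hsc (x + t • (y - x)) x
      rw [add_sub_cancel_left, norm_smul, Real.norm_of_nonneg ht.1.le, inner_smul_right,
        inner_sub_left] at h
      rw [zero_smul, add_zero]
      have : μ * ‖y - x‖ ^ 2 * t ≤ ⟪gradient f (x + t • (y - x)), y - x⟫ - ⟪gradient f x, y - x⟫ :=
        le_of_mul_le_mul_left (by linarith) ht.1
      linarith
  simp only [one_smul, zero_smul, add_zero, add_sub_cancel] at key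
  linarith

theorem norm_gradient_sq_add_le_inner {μ L : ℝ} (hμ : 0 ≤ μ) (hL : 0 < L) (hf : Differentiable ℝ f)
    (hsc : ∀ a b, μ * ‖a - b‖ ^ 2 ≤ ⟪gradient f a - gradient f b, a - b⟫)
    (hlip : ∀ a b, ‖gradient f a - gradient f b‖ ≤ L * ‖a - b‖)
    {zstar : E} (hzstar : gradient f zstar = 0) (w : E) :
    ‖gradient f w‖ ^ 2 + μ * (L + μ) * ‖w - zstar‖ ^ 2
      ≤ (L + 2 * μ) * ⟪gradient f w, w - zstar⟫ := by
  have hexpand : ∀ a b : E, ‖b‖ ^ 2 = ‖a‖ ^ 2 + 2 * ⟪a, b - a⟫ + ‖b - a‖ ^ 2 := fun a b => by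
    rw [← norm_add_sq_real, add_sub_cancel]
  have hinner : ∀ a b : E, ⟪gradient f a - μ • a, b - a⟫
      = ⟪gradient f a, b - a⟫ - μ * ⟪a, b - a⟫ := fun a b => by
    rw [inner_sub_left, real_inner_smul_left]
  have key := norm_sub_sq_le_mul_inner_of_quadratic_bounds (h := fun a => f a - μ / 2 * ‖a‖ ^ 2)
    (G := fun a => gradient f a - μ • a) hL
    (fun a b => by
      rw [hinner, hexpand a b]
      linarith [add_inner_gradient_add_le_of_strongly_monotone hf hsc a b])
    (fun a b => by
      rw [hinner, hexpand a b]
      linarith [le_add_inner_gradient_add_of_lipschitz hf hlip a b,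
        mul_nonneg hμ (sq_nonneg ‖b - a‖)])
    zstar w
  have hdiff : gradient f w - μ • w - (gradient f zstar - μ • zstar)
      = gradient f w - μ • (w - zstar) := by
    rw [hzstar, smul_sub]
    abel
  rw [hdiff, norm_sub_sq_real, inner_sub_left, real_inner_smul_right, real_inner_smul_left,
    norm_smul, Real.norm_eq_abs, mul_pow, sq_abs, real_inner_self_eq_norm_sq] at key
  nlinarith

theorem norm_sub_smul_gradient_sq_le {μ L α : ℝ} (hμ : 0 ≤ μ) (hL : 0 < L) (hf : Differentiable ℝ f)
    (hsc : ∀ a b, μ * ‖a - b‖ ^ 2 ≤ ⟪gradient f a - gradient f b, a - b⟫)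
    (hlip : ∀ a b, ‖gradient f a - gradient f b‖ ≤ L * ‖a - b‖)
    {zstar : E} (hzstar : gradient f zstar = 0) (hα : 0 ≤ α) (hαL : α * (L + 2 * μ) ≤ 2)
    (w : E) :
    ‖(w - zstar) - α • gradient f w‖ ^ 2 ≤ (1 - α * μ) ^ 2 * ‖w - zstar‖ ^ 2 := by
  have hmono : μ * ‖w - zstar‖ ^ 2 ≤ ⟪gradient f w, w - zstar⟫ := by
    simpa [hzstar] using hsc w zstar
  have hcoco := norm_gradient_sq_add_le_inner hμ hL hf hsc hlip hzstar w
  rw [norm_sub_sq_real, real_inner_smul_right, norm_smul, mul_pow, Real.norm_eq_abs, sq_abs,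
    real_inner_comm]
  nlinarith [mul_nonneg (mul_nonneg hα (sub_nonneg.2 hαL)) (sub_nonneg.2 hmono),
    mul_nonneg (sq_nonneg α) (sub_nonneg.2 hcoco)]

end Smooth

theorem one_sub_inv_sq_mul_add_le {A D k : ℝ} (hk : 1 ≤ k) (hA : 0 ≤ A) (hD : 2 * A ≤ D) :
    (1 - 1 / k) ^ 2 * (A / k + D / k ^ 2) + A / k ^ 2 ≤ A / (k + 1) + D / (k + 1) ^ 2 := by
  have hk0 : 0 < k := by linarith
  rw [← sub_nonneg]
  have expand : A / (k + 1) + D / (k + 1) ^ 2 - ((1 - 1 / k) ^ 2 * (A / k + D / k ^ 2) + A / k ^ 2)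
      = (D * (2 * k ^ 2 - 1) - A * k * (k + 1)) / (k ^ 4 * (k + 1) ^ 2) := by
    field_simp
    ring
  rw [expand]
  apply div_nonneg _ (by positivity)
  nlinarith [mul_nonneg (mul_nonneg hA (by linarith : (0:ℝ) ≤ 3 * k + 2)) (sub_nonneg.2 hk),
    mul_nonneg (sub_nonneg.2 hD) (by nlinarith : (0:ℝ) ≤ 2 * k ^ 2 - 1)]

theorem exists_le_div_add_div_sq_of_recurrence {R : ℕ → ℝ} {A : ℝ} {k₀ : ℕ} (hk₀ : 1 ≤ k₀)
    (hA : 0 ≤ A) (hR : ∀ k, 0 ≤ R k)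
    (hstep : ∀ k, k₀ ≤ k → R (k + 1) ≤ (1 - 1 / (k : ℝ)) ^ 2 * R k + A / (k : ℝ) ^ 2) :
    ∃ D, 0 ≤ D ∧ ∀ k, 1 ≤ k → R k ≤ A / k + D / (k : ℝ) ^ 2 := by
  set D := 2 * A + ∑ j ∈ Finset.range (k₀ + 1), (j : ℝ) ^ 2 * R j
  have hsum : 0 ≤ ∑ j ∈ Finset.range (k₀ + 1), (j : ℝ) ^ 2 * R j :=
    Finset.sum_nonneg fun j _ => mul_nonneg (sq_nonneg _) (hR j)
  have initial : ∀ k, 1 ≤ k → k ≤ k₀ → R k ≤ A / k + D / (k : ℝ) ^ 2 := fun k hk hkk₀ => by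
    have hk' : (0 : ℝ) < k := by exact_mod_cast hk
    have : (k : ℝ) ^ 2 * R k ≤ D := by
      have := Finset.single_le_sum (f := fun j : ℕ => (j : ℝ) ^ 2 * R j)
        (fun j _ => mul_nonneg (sq_nonneg _) (hR j)) (Finset.mem_range.2 (Nat.lt_succ_of_le hkk₀))
      linarith
    have : R k ≤ D / (k : ℝ) ^ 2 := by
      rw [le_div_iff₀ (by positivity)]
      linarith
    linarith [div_nonneg hA hk'.le]
  refine ⟨D, by linarith, fun k hk => ?_⟩
  rcases le_total k k₀ with hkk₀ | hkk₀
  · exact initial k hk hkk₀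
  induction k, hkk₀ using Nat.le_induction with
  | base => exact initial k₀ hk₀ le_rfl
  | succ k hkk₀ ih =>
    have hk1 : (1 : ℝ) ≤ k := by exact_mod_cast hk₀.trans hkk₀
    calc R (k + 1) ≤ (1 - 1 / (k : ℝ)) ^ 2 * R k + A / (k : ℝ) ^ 2 := hstep k hkk₀
      _ ≤ (1 - 1 / (k : ℝ)) ^ 2 * (A / k + D / (k : ℝ) ^ 2) + A / (k : ℝ) ^ 2 := by
          gcongr
          exact ih (hk₀.trans hkk₀)
      _ ≤ A / ((k + 1 : ℕ) : ℝ) + D / ((k + 1 : ℕ) : ℝ) ^ 2 := by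
          push_cast
          exact one_sub_inv_sq_mul_add_le hk1 hA (by linarith)

section Probability

variable {Ω E : Type*} {m mΩ : MeasurableSpace Ω} {μ : Measure Ω} [NormedAddCommGroup E]

theorem MeasureTheory.MemLp.integrable_norm_sq {u : Ω → E} (hu : MemLp u 2 μ) :
    Integrable (fun ω => ‖u ω‖ ^ 2) μ :=
  (memLp_two_iff_integrable_sq_norm hu.1).1 hu

theorem integral_le_of_condExp_le [IsProbabilityMeasure μ] (hm : m ≤ mΩ) {X : Ω → ℝ} {c : ℝ}
    (hX : μ[X | m] ≤ᵐ[μ] fun _ => c) : ∫ ω, X ω ∂μ ≤ c := by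
  rw [← integral_condExp hm]
  simpa using integral_mono_ae integrable_condExp (integrable_const c) hX

variable [InnerProductSpace ℝ E]

theorem MeasureTheory.MemLp.integrable_inner {u v : Ω → E} (hu : MemLp u 2 μ)
    (hv : MemLp v 2 μ) : Integrable (fun ω => ⟪u ω, v ω⟫) μ := by
  refine (L2.integrable_inner (𝕜 := ℝ) (hu.toLp u) (hv.toLp v)).congr ?_
  filter_upwards [hu.coeFn_toLp, hv.coeFn_toLp] with ω hu' hv'
  rw [hu', hv']

variable [CompleteSpace E]

theorem integral_inner_eq_zero_of_condExp_eq_zero [IsFiniteMeasure μ] (hm : m ≤ mΩ)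
    {v X : Ω → E} (hv : StronglyMeasurable[m] v) (hvX : Integrable (fun ω => ⟪v ω, X ω⟫) μ)
    (hX : Integrable X μ) (hX0 : μ[X | m] =ᵐ[μ] 0) : ∫ ω, ⟪v ω, X ω⟫ ∂μ = 0 := by
  rw [← integral_condExp hm]
  refine integral_eq_zero_of_ae ?_
  filter_upwards [condExp_bilin_of_stronglyMeasurable_left (innerSL ℝ) hv hvX hX, hX0]
    with ω hpull hzero
  exact hpull.trans (by simp [hzero])

theorem integral_norm_sub_smul_sq [IsFiniteMeasure μ] (hm : m ≤ mΩ) {v X : Ω → E}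
    (hv : StronglyMeasurable[m] v) (hv₂ : MemLp v 2 μ) (hX₂ : MemLp X 2 μ)
    (hX0 : μ[X | m] =ᵐ[μ] 0) (α : ℝ) :
    ∫ ω, ‖v ω - α • X ω‖ ^ 2 ∂μ = ∫ ω, ‖v ω‖ ^ 2 ∂μ + α ^ 2 * ∫ ω, ‖X ω‖ ^ 2 ∂μ := by
  have hcross := integral_inner_eq_zero_of_condExp_eq_zero hm hv (hv₂.integrable_inner hX₂)
    (hX₂.integrable one_le_two) hX0
  have hexpand : ∀ ω, ‖v ω - α • X ω‖ ^ 2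
      = ‖v ω‖ ^ 2 - 2 * α * ⟪v ω, X ω⟫ + α ^ 2 * ‖X ω‖ ^ 2 := fun ω => by
    rw [norm_sub_sq_real, real_inner_smul_right, norm_smul, mul_pow, Real.norm_eq_abs, sq_abs]
    ring
  have hcross_int : Integrable (fun ω => 2 * α * ⟪v ω, X ω⟫) μ :=
    (hv₂.integrable_inner hX₂).const_mul _
  have hX_int : Integrable (fun ω => α ^ 2 * ‖X ω‖ ^ 2) μ := hX₂.integrable_norm_sq.const_mul _
  have hdiff_int : Integrable (fun ω => ‖v ω‖ ^ 2 - 2 * α * ⟪v ω, X ω⟫) μ :=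
    hv₂.integrable_norm_sq.sub hcross_int
  simp_rw [hexpand]
  rw [integral_add hdiff_int hX_int,
    integral_sub hv₂.integrable_norm_sq hcross_int, integral_const_mul, integral_const_mul,
    hcross]
  ring

end Probability

theorem integral_norm_sgd_step_sub_sq_le {Ω E : Type*} [NormedAddCommGroup E]
    [InnerProductSpace ℝ E] [CompleteSpace E] {m mΩ : MeasurableSpace Ω} {P : Measure Ω}
    [IsProbabilityMeasure P] (hm : m ≤ mΩ) {f : E → ℝ} {μ L α c : ℝ} (hμ : 0 ≤ μ) (hL : 0 < L)
    (hf : Differentiable ℝ f)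
    (hsc : ∀ a b, μ * ‖a - b‖ ^ 2 ≤ ⟪gradient f a - gradient f b, a - b⟫)
    (hlip : ∀ a b, ‖gradient f a - gradient f b‖ ≤ L * ‖a - b‖)
    {zstar : E} (hzstar : gradient f zstar = 0) {x g : Ω → E} (hx : StronglyMeasurable[m] x)
    (hx₂ : MemLp x 2 P) (hg₂ : MemLp g 2 P)
    (hunbiased : P[g | m] =ᵐ[P] fun ω => gradient f (x ω))
    (hvar : P[(fun ω => ‖g ω - gradient f (x ω)‖ ^ 2) | m] ≤ᵐ[P] fun _ => c)
    (hα : 0 ≤ α) (hαL : α * (L + 2 * μ) ≤ 2) :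
    ∫ ω, ‖x ω - α • g ω - zstar‖ ^ 2 ∂P
      ≤ (1 - α * μ) ^ 2 * ∫ ω, ‖x ω - zstar‖ ^ 2 ∂P + α ^ 2 * c := by
  have hgrad_lip : LipschitzWith (Real.toNNReal L) (gradient f) :=
    LipschitzWith.of_dist_le_mul fun a b => by
      simpa [dist_eq_norm, Real.coe_toNNReal L hL.le] using hlip a b
  have hG : StronglyMeasurable[m] fun ω => gradient f (x ω) :=
    hgrad_lip.continuous.comp_stronglyMeasurable hx
  have hu₂ : MemLp (fun ω => x ω - zstar) 2 P := hx₂.sub (memLp_const zstar)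
  have hG₂ : MemLp (fun ω => gradient f (x ω)) 2 P :=
    hu₂.of_le_mul (c := L) (hG.mono hm).aestronglyMeasurable
      (ae_of_all _ fun ω => by simpa [hzstar] using hlip (x ω) zstar)
  have hnoise : P[fun ω => g ω - gradient f (x ω) | m] =ᵐ[P] 0 := by
    have hG_cond : P[fun ω => gradient f (x ω) | m] = fun ω => gradient f (x ω) :=
      condExp_of_stronglyMeasurable hm hG (hG₂.integrable one_le_two)
    filter_upwards [condExp_sub (hg₂.integrable one_le_two) (hG₂.integrable one_le_two) m,
      hunbiased] with ω hsub hω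
    exact hsub.trans (by simp [hω, hG_cond])
  have hv₂ : MemLp (fun ω => x ω - zstar - α • gradient f (x ω)) 2 P := hu₂.sub (hG₂.const_smul α)
  calc ∫ ω, ‖x ω - α • g ω - zstar‖ ^ 2 ∂P
      = ∫ ω, ‖(x ω - zstar - α • gradient f (x ω)) - α • (g ω - gradient f (x ω))‖ ^ 2 ∂P := by
        simp_rw [smul_sub]
        congr! 4
        abel
    _ = ∫ ω, ‖x ω - zstar - α • gradient f (x ω)‖ ^ 2 ∂P
          + α ^ 2 * ∫ ω, ‖g ω - gradient f (x ω)‖ ^ 2 ∂P :=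
        integral_norm_sub_smul_sq hm ((hx.sub stronglyMeasurable_const).sub (hG.const_smul α))
          hv₂ (hg₂.sub hG₂) hnoise α
    _ ≤ (1 - α * μ) ^ 2 * ∫ ω, ‖x ω - zstar‖ ^ 2 ∂P + α ^ 2 * c := by
        gcongr ?_ + α ^ 2 * ?_
        · rw [← integral_const_mul]
          exact integral_mono hv₂.integrable_norm_sq (hu₂.integrable_norm_sq.const_mul _)
            fun ω => norm_sub_smul_gradient_sq_le hμ hL hf hsc hlip hzstar hα hαL (x ω)
        · exact integral_le_of_condExp_le hm hvar

theorem sgd_convergence_rate_general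
    {d : ℕ} (f : EuclideanSpace ℝ (Fin d) → ℝ) (μ L : ℝ)
    (hμ : 0 < μ) (hμL : μ ≤ L)
    (hdiff : Differentiable ℝ f)
    (hsc : ∀ z z' : EuclideanSpace ℝ (Fin d),
      μ * ‖z - z'‖ ^ 2 ≤ ⟪gradient f z - gradient f z', z - z'⟫)
    (hlip : ∀ z z' : EuclideanSpace ℝ (Fin d),
      ‖gradient f z - gradient f z'‖ ≤ L * ‖z - z'‖)
    (zstar : EuclideanSpace ℝ (Fin d)) (hzstar : gradient f zstar = 0)
    {Ω : Type*} {F : MeasurableSpace Ω} (P : Measure Ω) [IsProbabilityMeasure P]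
    (ℱ : Filtration ℕ F)
    (z g : ℕ → Ω → EuclideanSpace ℝ (Fin d))
    (hz_adapted : ∀ k, 1 ≤ k → StronglyMeasurable[ℱ k] (z k))
    (hz_L2 : ∀ k, 1 ≤ k → MemLp (z k) 2 P)
    (hg_L2 : ∀ k, 1 ≤ k → MemLp (g k) 2 P)
    (hupdate : ∀ k, 1 ≤ k → ∀ ω, z (k + 1) ω = z k ω - (1 / (μ * k)) • g k ω)
    (σ : ℝ) (n : ℕ)
    (hunbiased : ∀ k, 1 ≤ k →
      P[g k | ℱ k] =ᵐ[P] fun ω => gradient f (z k ω))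
    (hvar : ∀ k, 1 ≤ k →
      P[(fun ω => ‖g k ω - gradient f (z k ω)‖ ^ 2) | ℱ k] ≤ᵐ[P]
        fun _ => σ ^ 2 / n) :
    ∃ D : ℝ, 0 ≤ D ∧ ∀ k : ℕ, 1 ≤ k →
      ∫ ω, ‖z k ω - zstar‖ ^ 2 ∂P ≤
        σ ^ 2 / (n * μ ^ 2 * k) + D / (k : ℝ) ^ 2 := by
  have hL : 0 < L := hμ.trans_le hμL
  obtain ⟨k₀, hk₀⟩ := exists_nat_ge ((L + 2 * μ) / (2 * μ))
  have hk₀_pos : 1 ≤ k₀ := by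
    have : 1 ≤ (L + 2 * μ) / (2 * μ) := by rw [le_div_iff₀ (by positivity)]; linarith
    exact_mod_cast this.trans hk₀
  have hrec : ∀ k, k₀ ≤ k → ∫ ω, ‖z (k + 1) ω - zstar‖ ^ 2 ∂P
      ≤ (1 - 1 / (k : ℝ)) ^ 2 * ∫ ω, ‖z k ω - zstar‖ ^ 2 ∂P
        + σ ^ 2 / (n * μ ^ 2) / (k : ℝ) ^ 2 := fun k hk => by
    have hk₁ : 1 ≤ k := hk₀_pos.trans hk
    have hk_pos : (0 : ℝ) < k := by exact_mod_cast hk₁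
    have hαL : 1 / (μ * k) * (L + 2 * μ) ≤ 2 := by
      have := (div_le_iff₀ (by positivity)).1 (hk₀.trans (Nat.cast_le.2 hk))
      rw [one_div_mul_eq_div, div_le_iff₀ (by positivity)]
      linarith
    have hstep := integral_norm_sgd_step_sub_sq_le (ℱ.le k) hμ.le hL hdiff hsc hlip hzstar
      (hz_adapted k hk₁) (hz_L2 k hk₁) (hg_L2 k hk₁) (hunbiased k hk₁) (hvar k hk₁)
      (by positivity) hαL
    simp only [hupdate k hk₁]
    convert hstep using 2 <;> field_simp
  obtain ⟨D, hD, hbound⟩ := exists_le_div_add_div_sq_of_recurrence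
    (R := fun k => ∫ ω, ‖z k ω - zstar‖ ^ 2 ∂P) hk₀_pos (by positivity)
    (fun k => integral_nonneg fun ω => sq_nonneg _) hrec
  exact ⟨D, hD, fun k hk => by simpa only [div_div] using hbound k hk⟩

/-- Theorem 1 of the paper: centralized stochastic gradient descent with stepsizes
`α_k = 1/(μk)` on a `μ`-strongly convex function with `L`-Lipschitz gradient, driven by
unbiased gradient estimates whose conditional variance is at most `σ²/n`, satisfies
`E[‖z(k) − z*‖²] ≤ σ²/(nμ²k) + O(1/k²)`. -/
theorem sgd_convergence_rate
    {d : ℕ} (f : EuclideanSpace ℝ (Fin d) → ℝ) (μ L : ℝ)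
    (hμ : 0 < μ) (hμL : μ ≤ L)
    (hdiff : Differentiable ℝ f)
    (hsc : ∀ z z' : EuclideanSpace ℝ (Fin d),
      μ * ‖z - z'‖ ^ 2 ≤ ⟪gradient f z - gradient f z', z - z'⟫)
    (hlip : ∀ z z' : EuclideanSpace ℝ (Fin d),
      ‖gradient f z - gradient f z'‖ ≤ L * ‖z - z'‖)
    (zstar : EuclideanSpace ℝ (Fin d)) (hzstar : gradient f zstar = 0)
    {Ω : Type*} {F : MeasurableSpace Ω} (P : Measure Ω) [IsProbabilityMeasure P]
    (ℱ : Filtration ℕ F)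
    (z g : ℕ → Ω → EuclideanSpace ℝ (Fin d))
    (hz_adapted : ∀ k, 1 ≤ k → StronglyMeasurable[ℱ k] (z k))
    (hz_L2 : ∀ k, 1 ≤ k → MemLp (z k) 2 P)
    (hg_meas : ∀ k, 1 ≤ k → StronglyMeasurable[ℱ (k + 1)] (g k))
    (hg_L2 : ∀ k, 1 ≤ k → MemLp (g k) 2 P)
    (hupdate : ∀ k, 1 ≤ k → ∀ ω, z (k + 1) ω = z k ω - (1 / (μ * k)) • g k ω)
    (σ : ℝ) (hσ : 0 < σ) (n : ℕ) (hn : 1 ≤ n)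
    (hunbiased : ∀ k, 1 ≤ k →
      P[g k | ℱ k] =ᵐ[P] fun ω => gradient f (z k ω))
    (hvar : ∀ k, 1 ≤ k →
      P[(fun ω => ‖g k ω - gradient f (z k ω)‖ ^ 2) | ℱ k] ≤ᵐ[P]
        fun _ => σ ^ 2 / n) :
    ∃ D : ℝ, 0 ≤ D ∧ ∀ k : ℕ, 1 ≤ k →
      ∫ ω, ‖z k ω - zstar‖ ^ 2 ∂P ≤
        σ ^ 2 / (n * μ ^ 2 * k) + D / (k : ℝ) ^ 2 :=
  sgd_convergence_rate_general f μ L hμ hμL hdiff hsc hlip zstar hzstar P ℱ z g hz_adapted hz_L2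
    hg_L2 hupdate σ n hunbiased hvar
end

section
/- Let (u_k)_{k≥1} and (v_k)_{k≥1} be sequences of nonnegative real numbers and a, b, c, V ≥ 0 constants such that for all integers k ≥ 1: u_{k+1} ≤ (1 − 1/k)² u_k + (a/k)·√(u_k v_k) + b v_k / k² + c/k², and v_k ≤ V/k². Then there exists a constant M ≥ 0 (depending only on u_1, a, b, c, V) such that u_k ≤ M/k for all k ≥ 1. -/
/-!
Induction on `u k ≤ M / k`. Against the target `M / (k + 1)`, the contraction
`(1 - 1/k)² · M / k` leaves a slack of at least `M / (2 k²)`. The perturbation terms fit into that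
slack once `M ≥ 4 (b V + c)` and `M ≥ 16 a² V`, because `u k ≤ M / k` and `v k ≤ V / k²` give
`√(u k v k) ≤ √(M V) / k`.
-/

lemma one_sub_one_div_sq_mul_div_add_le {x M : ℝ} (hx : 1 ≤ x) (hM : 0 ≤ M) :
    (1 - 1 / x) ^ 2 * (M / x) + M / (2 * x ^ 2) ≤ M / (x + 1) := by
  have hx0 : 0 < x := by linarith
  rw [one_sub_div hx0.ne', div_pow, div_mul_div_comm, div_add_div _ _ (by positivity) (by positivity),
    div_le_div_iff₀ (by positivity) (by positivity)]
  -- after clearing denominators the inequality reduces to `x² + x ≥ 2`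
  have hslack : 0 ≤ M * (x ^ 2 + x - 2) := mul_nonneg hM (by nlinarith)
  have hpow : 0 ≤ x ^ 5 := by positivity
  nlinarith [mul_nonneg hslack hpow]

lemma sqrt_mul_le_sqrt_mul_div {x u v M V : ℝ} (hx : 1 ≤ x) (hM : 0 ≤ M) (hV : 0 ≤ V)
    (hv₀ : 0 ≤ v) (hu : u ≤ M / x) (hv : v ≤ V / x ^ 2) :
    √(u * v) ≤ √(M * V) / x := by
  have hx0 : 0 < x := by linarith
  have huv : u * v ≤ M * V / x ^ 2 :=
    calc u * v ≤ M / x * (V / x ^ 2) := mul_le_mul hu hv hv₀ (by positivity)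
      _ = M * V / x ^ 2 / x := by ring
      _ ≤ M * V / x ^ 2 := div_le_self (by positivity) hx
  calc √(u * v) ≤ √(M * V / x ^ 2) := Real.sqrt_le_sqrt huv
    _ = √(M * V) / x := by rw [Real.sqrt_div' _ (sq_nonneg x), Real.sqrt_sq hx0.le]

lemma mul_sqrt_mul_le_div_four {a M V : ℝ} (ha : 0 ≤ a) (hM : 0 ≤ M)
    (hMa : 16 * a ^ 2 * V ≤ M) : a * √(M * V) ≤ M / 4 := by
  calc a * √(M * V) = √(a ^ 2 * (M * V)) := by
        rw [Real.sqrt_mul (sq_nonneg a), Real.sqrt_sq ha]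
    _ ≤ √((M / 4) ^ 2) := Real.sqrt_le_sqrt (by nlinarith)
    _ = M / 4 := Real.sqrt_sq (by positivity)

lemma perturbation_le {x u v a b c M V : ℝ} (hx : 1 ≤ x) (ha : 0 ≤ a) (hb : 0 ≤ b)
    (hV : 0 ≤ V) (hM : 0 ≤ M) (hv₀ : 0 ≤ v) (hu : u ≤ M / x) (hv : v ≤ V / x ^ 2)
    (hMa : 16 * a ^ 2 * V ≤ M) (hMbc : 4 * (b * V + c) ≤ M) :
    a / x * √(u * v) + b * v / x ^ 2 + c / x ^ 2 ≤ M / (2 * x ^ 2) := by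
  have hx0 : 0 < x := by linarith
  have hsqrt : a / x * √(u * v) ≤ M / 4 / x ^ 2 :=
    calc a / x * √(u * v) ≤ a / x * (√(M * V) / x) :=
          mul_le_mul_of_nonneg_left (sqrt_mul_le_sqrt_mul_div hx hM hV hv₀ hu hv) (by positivity)
      _ = a * √(M * V) / x ^ 2 := by ring
      _ ≤ M / 4 / x ^ 2 := by gcongr; exact mul_sqrt_mul_le_div_four ha hM hMa
  have hbv : b * v ≤ b * V :=
    mul_le_mul_of_nonneg_left (hv.trans (div_le_self hV (one_le_pow₀ hx))) hb
  have hrest : b * v / x ^ 2 + c / x ^ 2 ≤ M / 4 / x ^ 2 := by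
    rw [← add_div]; gcongr; linarith
  calc a / x * √(u * v) + b * v / x ^ 2 + c / x ^ 2 ≤ M / 4 / x ^ 2 + M / 4 / x ^ 2 := by
        linarith
    _ = M / (2 * x ^ 2) := by ring

theorem dsgd_recursion_rate_general
    (u v : ℕ → ℝ) (a b c V : ℝ)
    (ha : 0 ≤ a) (hb : 0 ≤ b) (hV : 0 ≤ V)
    (hv_nonneg : ∀ k, 1 ≤ k → 0 ≤ v k)
    (hrec : ∀ k : ℕ, 1 ≤ k →
      u (k + 1) ≤ (1 - 1 / (k : ℝ)) ^ 2 * u k + (a / k) * Real.sqrt (u k * v k)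
        + b * v k / (k : ℝ) ^ 2 + c / (k : ℝ) ^ 2)
    (hv : ∀ k : ℕ, 1 ≤ k → v k ≤ V / (k : ℝ) ^ 2) :
    ∃ M : ℝ, 0 ≤ M ∧ ∀ k : ℕ, 1 ≤ k → u k ≤ M / (k : ℝ) := by
  set M := max (u 1) (max (4 * (b * V + c)) (16 * a ^ 2 * V))
  have hMbc : 4 * (b * V + c) ≤ M := (le_max_left _ _).trans (le_max_right _ _)
  have hMa : 16 * a ^ 2 * V ≤ M := (le_max_right _ _).trans (le_max_right _ _)
  have hM : 0 ≤ M := (by positivity : (0 : ℝ) ≤ 16 * a ^ 2 * V).trans hMa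
  refine ⟨M, hM, fun k hk => ?_⟩
  induction k, hk using Nat.le_induction with
  | base => rw [Nat.cast_one, div_one]; exact le_max_left _ _
  | succ k hk ih =>
    have hx : (1 : ℝ) ≤ k := by exact_mod_cast hk
    have hcontr : (1 - 1 / (k : ℝ)) ^ 2 * u k ≤ (1 - 1 / (k : ℝ)) ^ 2 * (M / k) :=
      mul_le_mul_of_nonneg_left ih (sq_nonneg _)
    have hpert := perturbation_le hx ha hb hV hM (hv_nonneg k hk) ih (hv k hk) hMa hMbc
    have hstep := one_sub_one_div_sq_mul_div_add_le hx hM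
    push_cast
    linarith [hrec k hk]

/-- The deterministic recursion behind the network-independence analysis of DSGD
(relation (10) of the paper): if the consensus error `v_k` decays like `1/k²`, then the
optimization error `u_k` governed by
`u_{k+1} ≤ (1 − 1/k)² u_k + (a/k)√(u_k v_k) + b v_k/k² + c/k²`
converges at the centralized rate `O(1/k)`. -/
theorem dsgd_recursion_rate
    (u v : ℕ → ℝ) (a b c V : ℝ)
    (ha : 0 ≤ a) (hb : 0 ≤ b) (hc : 0 ≤ c) (hV : 0 ≤ V)
    (hu_nonneg : ∀ k, 1 ≤ k → 0 ≤ u k)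
    (hv_nonneg : ∀ k, 1 ≤ k → 0 ≤ v k)
    (hrec : ∀ k : ℕ, 1 ≤ k →
      u (k + 1) ≤ (1 - 1 / (k : ℝ)) ^ 2 * u k + (a / k) * Real.sqrt (u k * v k)
        + b * v k / (k : ℝ) ^ 2 + c / (k : ℝ) ^ 2)
    (hv : ∀ k : ℕ, 1 ≤ k → v k ≤ V / (k : ℝ) ^ 2) :
    ∃ M : ℝ, 0 ≤ M ∧ ∀ k : ℕ, 1 ≤ k → u k ≤ M / (k : ℝ) :=
  dsgd_recursion_rate_general u v a b c V ha hb hV hv_nonneg hrec hv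
end
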